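/- Let m, d ≥ 1, let C > 0, and let W, W₀ : Fin m → ℝ^d. Suppose that for every x ∈ ℝ^d with ‖x‖ = 1 and every R > 0, | (1/m) · #{ i : |⟨W₀_i, x⟩| ≤ R } − γ_d{ w : |⟨w, x⟩| ≤ R } | ≤ m^{−1/3} + C √(d/m). Then for every x with ‖x‖ = 1, (1/m) · S_{W,W₀}(x) ≤ m^{−1/3} + C √(d/m) + 2^{4/3} · ‖W − W₀‖_F^{2/3} / (m^{1/3} π^{1/3}), where ‖W − W₀‖_F := √(Σ_i ‖W_i − W₀_i‖²). -/

import Mathlib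

open RealInnerProductSpace MeasureTheory

/-- The standard Gaussian measure on `EuclideanSpace ℝ (Fin d)`, i.e. the product
of `d` standard real Gaussian measures `N(0,1)`. -/
noncomputable def stdGaussian (d : ℕ) : Measure (EuclideanSpace ℝ (Fin d)) :=
  (Measure.pi fun _ : Fin d => ProbabilityTheory.gaussianReal 0 1).map
    (MeasurableEquiv.toLp 2 (Fin d → ℝ))

open Classical in
/-- The number of neurons whose activation sign at `x` differs between the
weights `W` and the weights `W₀`. -/
noncomputable def signFlips (m d : ℕ) (W W₀ : Fin m → EuclideanSpace ℝ (Fin d))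
    (x : EuclideanSpace ℝ (Fin d)) : ℕ :=
  (Finset.univ.filter fun i : Fin m => ¬((0 ≤ ⟪W i, x⟫) ↔ (0 ≤ ⟪W₀ i, x⟫))).card

/-! A neuron whose sign at `x` flips satisfies `|⟪W₀ i, x⟫| ≤ |⟪W i - W₀ i, x⟫| ≤ ‖W i - W₀ i‖`.
So for every width `R > 0` a flipped neuron either lies in the band `|⟪W₀ i, x⟫| ≤ R`, whose
empirical mass is within the assumed error of its Gaussian mass `≤ 2R/√(2π)` (as `⟪w, x⟫ ∼ N(0,1)`),
or has `‖W i - W₀ i‖ > R`, which by Markov happens for at most `‖W - W₀‖_F² / R²` neurons.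
The width `R = √π u` with `u = (‖W - W₀‖_F² / (m π))^{1/3}` turns the two error terms into
`√2 u` and `u`, and `√2 + 1 ≤ 2^{4/3}`. -/

open Real Set Finset
open ProbabilityTheory (gaussianReal gaussianPDFReal)
open scoped NNReal

lemma gaussianPDFReal_le_inv_sqrt (μ : ℝ) (v : ℝ≥0) (x : ℝ) :
    gaussianPDFReal μ v x ≤ (√(2 * π * v))⁻¹ := by
  rw [ProbabilityTheory.gaussianPDFReal]
  refine mul_le_of_le_one_right (by positivity) (exp_le_one_iff.mpr ?_)
  exact div_nonpos_of_nonpos_of_nonneg (neg_nonpos.mpr (sq_nonneg _)) (by positivity)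

lemma gaussianReal_real_Icc_le (μ : ℝ) {v : ℝ≥0} (hv : v ≠ 0) {a b : ℝ} (hab : a ≤ b) :
    (gaussianReal μ v).real (Icc a b) ≤ (b - a) / √(2 * π * v) := by
  rw [measureReal_def, ProbabilityTheory.gaussianReal_apply_eq_integral μ hv,
    ENNReal.toReal_ofReal (setIntegral_nonneg measurableSet_Icc
      fun _ _ => ProbabilityTheory.gaussianPDFReal_nonneg _ _ _)]
  calc ∫ t in Icc a b, gaussianPDFReal μ v t ≤ ∫ _ in Icc a b, (√(2 * π * v))⁻¹ :=
        setIntegral_mono_on (ProbabilityTheory.integrable_gaussianPDFReal μ v).integrableOn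
          (integrableOn_const measure_Icc_lt_top.ne) measurableSet_Icc
          fun t _ => gaussianPDFReal_le_inv_sqrt μ v t
    _ = (b - a) / √(2 * π * v) := by
        rw [setIntegral_const, Real.volume_real_Icc_of_le hab, smul_eq_mul, div_eq_mul_inv]

lemma map_inner_stdGaussian {E : Type*} [NormedAddCommGroup E] [InnerProductSpace ℝ E]
    [FiniteDimensional ℝ E] [MeasurableSpace E] [BorelSpace E] (x : E) :
    (ProbabilityTheory.stdGaussian E).map (fun w => ⟪w, x⟫) = gaussianReal 0 (‖x‖₊ ^ 2) := by
  have h := ProbabilityTheory.IsGaussian.map_eq_gaussianReal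
    (μ := ProbabilityTheory.stdGaussian E) (innerSL ℝ x)
  rw [ProbabilityTheory.integral_strongDual_stdGaussian,
    ProbabilityTheory.variance_dual_stdGaussian, innerSL_apply_norm] at h
  convert h using 2
  · ext w; simp [real_inner_comm]
  · ext; simp

lemma stdGaussian_eq_probabilityTheory_stdGaussian (d : ℕ) :
    stdGaussian d = ProbabilityTheory.stdGaussian (EuclideanSpace ℝ (Fin d)) :=
  ProbabilityTheory.map_pi_eq_stdGaussian

lemma stdGaussian_band_le {d : ℕ} {x : EuclideanSpace ℝ (Fin d)} (hx : x ≠ 0) {R : ℝ}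
    (hR : 0 ≤ R) :
    (stdGaussian d {w | |⟪w, x⟫| ≤ R}).toReal ≤ 2 * R / √(2 * π * ‖x‖ ^ 2) := by
  have hset : {w : EuclideanSpace ℝ (Fin d) | |⟪w, x⟫| ≤ R} = (⟪·, x⟫) ⁻¹' Icc (-R) R := by
    ext w; simp [abs_le]
  have h := gaussianReal_real_Icc_le 0 (v := ‖x‖₊ ^ 2) (by simpa using hx) (neg_le_self hR)
  rw [← map_inner_stdGaussian, measureReal_def, Measure.map_apply (by fun_prop) measurableSet_Icc,
    ← stdGaussian_eq_probabilityTheory_stdGaussian, ← hset] at h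
  simpa [two_mul] using h

lemma Finset.card_filter_le_mul_le_sum {ι : Type*} {s : Finset ι} {f : ι → ℝ}
    (hf : ∀ i ∈ s, 0 ≤ f i) (a : ℝ) [DecidablePred (a ≤ f ·)] :
    (#{i ∈ s | a ≤ f i} : ℝ) * a ≤ ∑ i ∈ s, f i :=
  calc (#{i ∈ s | a ≤ f i} : ℝ) * a = ∑ _ ∈ s with a ≤ f _, a := by
        rw [sum_const, nsmul_eq_mul]
    _ ≤ ∑ i ∈ s with a ≤ f i, f i := sum_le_sum fun i hi => (mem_filter.mp hi).2
    _ ≤ ∑ i ∈ s, f i := sum_le_sum_of_subset_of_nonneg (filter_subset _ _)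
        fun i hi _ => hf i hi

lemma abs_le_abs_sub_of_not_nonneg_iff {s t : ℝ} (h : ¬(0 ≤ s ↔ 0 ≤ t)) : |t| ≤ |s - t| := by
  rcases le_or_gt 0 t with ht | ht
  · have hs : s < 0 := not_le.mp fun hs => h (iff_of_true hs ht)
    rw [abs_of_nonneg ht, abs_of_neg (by linarith)]
    linarith
  · have hs : 0 ≤ s := not_lt.mp fun hs => h (iff_of_false hs.not_ge ht.not_ge)
    rw [abs_of_neg ht, abs_of_pos (by linarith)]
    linarith

section SignFlips

variable {m d : ℕ} (W W₀ : Fin m → EuclideanSpace ℝ (Fin d)) {x : EuclideanSpace ℝ (Fin d)}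

lemma signFlips_self : signFlips m d W W x = 0 := by
  simp [signFlips]

lemma abs_inner_le_norm_sub_of_not_nonneg_iff {i : Fin m} (hx : ‖x‖ ≤ 1)
    (h : ¬((0 ≤ ⟪W i, x⟫) ↔ (0 ≤ ⟪W₀ i, x⟫))) : |⟪W₀ i, x⟫| ≤ ‖W i - W₀ i‖ :=
  calc |⟪W₀ i, x⟫| ≤ |⟪W i - W₀ i, x⟫| := by
        rw [inner_sub_left]; exact abs_le_abs_sub_of_not_nonneg_iff h
    _ ≤ ‖W i - W₀ i‖ * ‖x‖ := abs_real_inner_le_norm _ _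
    _ ≤ ‖W i - W₀ i‖ := mul_le_of_le_one_right (norm_nonneg _) hx

lemma signFlips_le_card_add_sum_sq_div (hx : ‖x‖ ≤ 1) {R : ℝ} (hR : 0 < R) :
    (signFlips m d W W₀ x : ℝ) ≤
      #{i | |⟪W₀ i, x⟫| ≤ R} + (∑ i, ‖W i - W₀ i‖ ^ 2) / R ^ 2 := by
  have hsub : ({i | ¬((0 ≤ ⟪W i, x⟫) ↔ (0 ≤ ⟪W₀ i, x⟫))} : Finset (Fin m)) ⊆
      ({i | |⟪W₀ i, x⟫| ≤ R} : Finset (Fin m)) ∪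
        ({i | R ^ 2 ≤ ‖W i - W₀ i‖ ^ 2} : Finset (Fin m)) := by
    intro i hi
    have hi := abs_inner_le_norm_sub_of_not_nonneg_iff W W₀ hx (mem_filter.mp hi).2
    rcases le_or_gt ‖W i - W₀ i‖ R with hle | hgt
    · simp [hi.trans hle]
    · simp [pow_le_pow_left₀ hR.le hgt.le]
  have hcard : (signFlips m d W W₀ x : ℝ) ≤
      #{i | |⟪W₀ i, x⟫| ≤ R} + #{i | R ^ 2 ≤ ‖W i - W₀ i‖ ^ 2} := by
    exact_mod_cast (Finset.card_le_card hsub).trans (card_union_le _ _)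
  have hmarkov := Finset.card_filter_le_mul_le_sum (s := univ)
    (fun i _ => sq_nonneg ‖W i - W₀ i‖) (R ^ 2)
  rw [← le_div_iff₀ (by positivity)] at hmarkov
  linarith

end SignFlips

lemma exists_pos_linear_add_inv_sq_le {F m : ℝ} (hF : 0 < F) (hm : 0 < m) :
    ∃ R > 0, 2 * R / √(2 * π) + F ^ 2 / (m * R ^ 2) ≤
      2 ^ ((4 : ℝ) / 3) * F ^ ((2 : ℝ) / 3) / (m ^ ((1 : ℝ) / 3) * π ^ ((1 : ℝ) / 3)) := by
  set u := (F ^ 2 / (m * π)) ^ ((1 : ℝ) / 3) with hu_def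
  have hu : 0 < u := by positivity
  have hF2 : F ^ 2 = u ^ 3 * (m * π) := by
    have hu3 : u ^ 3 = F ^ 2 / (m * π) := by
      rw [← rpow_natCast, hu_def, ← rpow_mul (by positivity)]
      norm_num
    rw [hu3]
    field_simp
  have htarget : 2 ^ ((4 : ℝ) / 3) * F ^ ((2 : ℝ) / 3) / (m ^ ((1 : ℝ) / 3) * π ^ ((1 : ℝ) / 3))
      = 2 * 2 ^ ((1 : ℝ) / 3) * u := by
    rw [show (4 : ℝ) / 3 = 1 + 1 / 3 by norm_num, rpow_add two_pos, rpow_one, hu_def,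
      div_rpow (by positivity) (by positivity), mul_rpow hm.le pi_pos.le, ← rpow_natCast,
      ← rpow_mul hF.le]
    norm_num
    ring
  have hconst : √2 + 1 ≤ 2 * 2 ^ ((1 : ℝ) / 3) := by
    have hs : √2 ^ 2 = 2 := sq_sqrt zero_le_two
    have ht : ((2 : ℝ) ^ ((1 : ℝ) / 3)) ^ 3 = 2 := by
      rw [← rpow_natCast, ← rpow_mul zero_le_two]; norm_num
    refine le_of_pow_le_pow_left₀ three_ne_zero (by positivity) ?_
    rw [mul_pow, ht]
    nlinarith [sqrt_nonneg 2]
  refine ⟨√π * u, by positivity, ?_⟩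
  calc 2 * (√π * u) / √(2 * π) + F ^ 2 / (m * (√π * u) ^ 2) = (√2 + 1) * u := by
        rw [sqrt_mul zero_le_two, mul_pow, sq_sqrt pi_pos.le, hF2]
        field_simp
        rw [mul_add, mul_self_sqrt zero_le_two, mul_one]
    _ ≤ _ := by rw [htarget]; gcongr

open Classical in
theorem signFlips_frac_le_general (m d : ℕ) (hm : 1 ≤ m) (C : ℝ)
    (W W₀ : Fin m → EuclideanSpace ℝ (Fin d))
    (hband : ∀ x : EuclideanSpace ℝ (Fin d), ‖x‖ = 1 → ∀ R : ℝ, 0 < R →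
      |((1 : ℝ) / m) * ((Finset.univ.filter fun i : Fin m => |⟪W₀ i, x⟫| ≤ R).card : ℝ) -
          (stdGaussian d {w | |⟪w, x⟫| ≤ R}).toReal| ≤
        (m : ℝ) ^ (-(1 : ℝ) / 3) + C * Real.sqrt (d / m)) :
    ∀ x : EuclideanSpace ℝ (Fin d), ‖x‖ = 1 →
      ((1 : ℝ) / m) * (signFlips m d W W₀ x : ℝ) ≤
        (m : ℝ) ^ (-(1 : ℝ) / 3) + C * Real.sqrt (d / m) +
          2 ^ ((4 : ℝ) / 3) * Real.sqrt (∑ i, ‖W i - W₀ i‖ ^ 2) ^ ((2 : ℝ) / 3) /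
            ((m : ℝ) ^ ((1 : ℝ) / 3) * Real.pi ^ ((1 : ℝ) / 3)) := by
  intro x hx
  have hm0 : (0 : ℝ) < m := by exact_mod_cast hm
  have hε := (abs_nonneg _).trans (hband x hx 1 one_pos)
  rcases (sqrt_nonneg (∑ i, ‖W i - W₀ i‖ ^ 2)).eq_or_lt with hF | hF
  · have hsum : ∑ i, ‖W i - W₀ i‖ ^ 2 = 0 :=
      (sqrt_eq_zero (sum_nonneg fun i _ => sq_nonneg _)).mp hF.symm
    have hW : W = W₀ := funext fun i => by
      simpa [sub_eq_zero] using (sum_eq_zero_iff_of_nonneg fun i _ => sq_nonneg _).mp hsum i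
    rw [← hF, hW, signFlips_self, zero_rpow (by norm_num)]
    simpa using hε
  obtain ⟨R, hR, hRle⟩ := exists_pos_linear_add_inv_sq_le hF hm0
  have hcount := signFlips_le_card_add_sum_sq_div W W₀ hx.le hR
  have hempirical := (abs_le.mp (hband x hx R hR)).2
  have hgauss := stdGaussian_band_le (ne_zero_of_norm_ne_zero (hx.trans_ne one_ne_zero)) hR.le
  rw [hx, one_pow, mul_one] at hgauss
  rw [sq_sqrt (sum_nonneg fun i _ => sq_nonneg _)] at hRle
  calc 1 / m * (signFlips m d W W₀ x : ℝ)
      ≤ 1 / m * (#{i | |⟪W₀ i, x⟫| ≤ R} + (∑ i, ‖W i - W₀ i‖ ^ 2) / R ^ 2) := by gcongr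
    _ = 1 / m * #{i | |⟪W₀ i, x⟫| ≤ R} + (∑ i, ‖W i - W₀ i‖ ^ 2) / (m * R ^ 2) := by ring
    _ ≤ _ := by linarith

open Classical in
/-- If the empirical band counts of the initialization `W₀` concentrate uniformly
around their Gaussian values, then the fraction of sign flips is bounded by
`m^{-1/3} + C √(d/m) + 2^{4/3} ‖W - W₀‖_F^{2/3} / (m^{1/3} π^{1/3})`. -/
theorem signFlips_frac_le (m d : ℕ) (hm : 1 ≤ m) (hd : 1 ≤ d) (C : ℝ) (hC : 0 < C)
    (W W₀ : Fin m → EuclideanSpace ℝ (Fin d))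
    (hband : ∀ x : EuclideanSpace ℝ (Fin d), ‖x‖ = 1 → ∀ R : ℝ, 0 < R →
      |((1 : ℝ) / m) * ((Finset.univ.filter fun i : Fin m => |⟪W₀ i, x⟫| ≤ R).card : ℝ) -
          (stdGaussian d {w | |⟪w, x⟫| ≤ R}).toReal| ≤
        (m : ℝ) ^ (-(1 : ℝ) / 3) + C * Real.sqrt (d / m)) :
    ∀ x : EuclideanSpace ℝ (Fin d), ‖x‖ = 1 →
      ((1 : ℝ) / m) * (signFlips m d W W₀ x : ℝ) ≤
        (m : ℝ) ^ (-(1 : ℝ) / 3) + C * Real.sqrt (d / m) +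
          2 ^ ((4 : ℝ) / 3) * Real.sqrt (∑ i, ‖W i - W₀ i‖ ^ 2) ^ ((2 : ℝ) / 3) /
            ((m : ℝ) ^ ((1 : ℝ) / 3) * Real.pi ^ ((1 : ℝ) / 3)) :=
  signFlips_frac_le_general m d hm C W W₀ hband
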